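/- If (a_1,...,a_n) is a cyclic permutation of (b_1,...,b_n), or of the reversed tuple (b_n,...,b_1), and M_n(a_1,...,a_n) = ε·Id with ε ∈ {±1_A}, then M_n(b_1,...,b_n) = ε·Id. -/
import Mathlib


open Matrix

/-- `Mlist [a₁,…,aₙ] = M(aₙ)⋯M(a₁)` where `M(a) = [[a,-1],[1,0]]`. -/
def Mlist {A : Type*} [CommRing A] (l : List A) : Matrix (Fin 2) (Fin 2) A :=
  ((l.map (fun a => !![a, -1; 1, 0])).reverse).prod

/-- The continuant `K` (tridiagonal determinant), with `K [] = 1`. -/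
def cont {A : Type*} [CommRing A] : List A → A
  | [] => 1
  | [a] => a
  | a :: b :: l => a * cont (b :: l) - cont l

/-- `(a₁,…,aₙ) ⊕ (b₁,…,bₘ) = (a₁+bₘ, a₂,…,aₙ₋₁, aₙ+b₁, b₂,…,bₘ₋₁)` (for lists of length ≥ 2). -/
def oplus {A : Type*} [CommRing A] (la lb : List A) : List A :=
  match la, lb with
  | a1 :: ta, b1 :: tb =>
      (a1 + tb.getLastD b1) :: (ta.dropLast ++ ((ta.getLastD a1 + b1) :: tb.dropLast))
  | _, _ => []

lemma Mlist_append {A : Type*} [CommRing A] (l₁ l₂ : List A) :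
    Mlist (l₁ ++ l₂) = Mlist l₂ * Mlist l₁ := by
  simp [Mlist, List.prod_append]

lemma Mlist_cons {A : Type*} [CommRing A] (a : A) (l : List A) :
    Mlist (a :: l) = Mlist l * !![a, -1; 1, 0] := by
  simp [Mlist]

lemma Mlist_det {A : Type*} [CommRing A] (l : List A) : (Mlist l).det = 1 := by
  induction l with
  | nil => simp [Mlist]
  | cons a l ih =>
      rw [Mlist_cons, det_mul, ih, one_mul]
      simp [Matrix.det_fin_two_of]

lemma Mlist_isUnit {A : Type*} [CommRing A] (l : List A) : IsUnit (Mlist l) := by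
  rw [Matrix.isUnit_iff_isUnit_det, Mlist_det]; exact isUnit_one

lemma swap_eq {A : Type*} [CommRing A] (X Y : Matrix (Fin 2) (Fin 2) A) (ε : A)
    (hX : IsUnit X) (h : X * Y = ε • 1) : Y * X = ε • 1 := by
  obtain ⟨u, rfl⟩ := hX
  calc Y * ↑u = ↑u⁻¹ * (↑u * Y * ↑u) := by
        rw [← mul_assoc, ← mul_assoc, u.inv_mul, one_mul]
    _ = ↑u⁻¹ * (ε • 1 * ↑u) := by rw [h]
    _ = ε • 1 := by
        rw [smul_mul_assoc, one_mul, mul_smul_comm, u.inv_mul]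

lemma Mlist_rotate {A : Type*} [CommRing A] (l : List A) (k : ℕ) (ε : A)
    (h : Mlist (l.rotate k) = ε • 1) : Mlist l = ε • 1 := by
  rcases Nat.eq_zero_or_pos l.length with h0 | hpos
  · rw [List.length_eq_zero_iff.mp h0] at h ⊢
    simpa using h
  · set m := k % l.length with hm
    have hle : m ≤ l.length := le_of_lt (Nat.mod_lt _ hpos)
    have hrot : l.rotate k = l.drop m ++ l.take m := by
      rw [← List.rotate_mod]
      exact List.rotate_eq_drop_append_take hle
    rw [hrot, Mlist_append] at h
    have hl : Mlist l = Mlist (l.drop m) * Mlist (l.take m) := by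
      conv_lhs => rw [← List.take_append_drop m l]
      exact Mlist_append _ _
    rw [hl]
    exact swap_eq _ _ _ (Mlist_isUnit _) h

lemma conjD_mul {R : Type*} [Ring R] (D X Y : R) (hD : D * D = 1) :
    (D * X * D) * (D * Y * D) = D * (X * Y) * D := by
  rw [mul_assoc (D * X) D (D * Y * D), ← mul_assoc D (D * Y) D, ← mul_assoc D D Y, hD,
    one_mul, ← mul_assoc (D * X) Y D, mul_assoc D X Y]

lemma Mlist_reverse {A : Type*} [CommRing A] (l : List A) :
    Mlist l.reverse = !![(1:A),0;0,-1] * (Mlist l)ᵀ * !![(1:A),0;0,-1] := by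
  have hD : !![(1:A),0;0,-1] * !![(1:A),0;0,-1] = 1 := by
    simp [Matrix.mul_fin_two, Matrix.one_fin_two]
  induction l with
  | nil =>
      rw [List.reverse_nil, show Mlist ([] : List A) = 1 from rfl, transpose_one, mul_one, hD]
  | cons a l ih =>
      have hstep : (a :: l).reverse = l.reverse ++ [a] := by simp
      have hMa : Mlist [a] = !![a, -1; 1, 0] := by simp [Mlist]
      have hfa : !![(1:A),0;0,-1] * (!![a, -1; 1, 0])ᵀ * !![(1:A),0;0,-1]
          = !![a, -1; 1, 0] := by
        have : (!![a, -1; 1, 0])ᵀ = !![a, 1; -1, 0] := by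
          ext i j
          fin_cases i <;> fin_cases j <;> simp
        rw [this]
        simp [Matrix.mul_fin_two]
      rw [hstep, Mlist_append, ih, hMa, ← hfa,
        conjD_mul _ _ _ hD, show Mlist (a :: l) = Mlist l * !![a, -1; 1, 0] from Mlist_cons a l,
        transpose_mul]

theorem stmt10 {A : Type*} [CommRing A] (la lb : List A) (ε : A) (hε : ε = 1 ∨ ε = -1)
    (h : ∃ k : ℕ, la = lb.rotate k ∨ la = lb.reverse.rotate k)
    (hM : Mlist la = ε • 1) : Mlist lb = ε • 1 := by
  obtain ⟨k, hk | hk⟩ := h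
  · rw [hk] at hM
    exact Mlist_rotate _ _ _ hM
  · rw [hk] at hM
    have hrev : Mlist lb.reverse = ε • 1 := Mlist_rotate _ _ _ hM
    rw [Mlist_reverse] at hrev
    have hD : !![(1:A),0;0,-1] * !![(1:A),0;0,-1] = 1 := by
      simp [Matrix.mul_fin_two, Matrix.one_fin_two]
    have hT : (Mlist lb)ᵀ = ε • 1 := by
      have := congrArg (fun X => !![(1:A),0;0,-1] * X * !![(1:A),0;0,-1]) hrev
      rw [← mul_assoc, ← mul_assoc, hD, one_mul, mul_assoc, mul_assoc, hD, mul_one,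
        smul_mul_assoc, one_mul, mul_smul_comm, hD] at this
      exact this
    have := congrArg Matrix.transpose hT
    simpa using this
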